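/- arXiv:math/0504063 — 4 statements merged into one kernel-verified Lean document; each statement's English description precedes it below -/
import Mathlib

section
/- Let Γ₁ and Γ₂ be discrete groups and let φ be the group trace on the group algebra ℂ(Γ₁ * Γ₂) (i.e. φ(g) = 0 for g ≠ 1 and φ(1) = 1, extended linearly). If a = a₁ ⋯ aₙ with aⱼ in the image of ℂΓ_{i(j)}, where i(1) ≠ i(2), i(2) ≠ i(3), …, and φ(aⱼ) = 0 for all j, then φ(a) = 0. -/
/-!
Let `Sᵢ` be the set of elements of the free product whose reduced word begins with a letter of
the `i`-th factor. A centered element of `ℂΓᵢ` is supported on the nontrivial letters of `Γᵢ`,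
and left multiplication by such a letter maps the complement of `Sᵢ` into `Sᵢ`. Multiplying in
the factors from the right, an alternating product of centered elements is therefore supported
on `S_{i(1)}`, which does not contain `1`, so its trace vanishes.
-/

open Function
open scoped Pointwise

namespace MonoidAlgebra

variable {R M N : Type*} [Semiring R]

theorem mul_mem_supported [Mul M] {s t : Set M} {x y : MonoidAlgebra R M}
    (hx : x ∈ supported R R s) (hy : y ∈ supported R R t) : x * y ∈ supported R R (s * t) := by
  classical
  intro m hm
  obtain ⟨u, hu, v, hv, rfl⟩ := Finset.mem_mul.mp (support_coeff_mul_subset x y hm)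
  exact Set.mul_mem_mul (hx hu) (hy hv)

theorem mapDomain_mem_supported {f : M → N} {s : Set M} {x : MonoidAlgebra R M}
    (hx : x ∈ supported R R s) : mapDomain f x ∈ supported R R (f '' s) := by
  classical
  intro n hn
  obtain ⟨m, hm, rfl⟩ := Finset.mem_image.mp (Finsupp.mapDomain_support hn)
  exact Set.mem_image_of_mem f (hx hm)

theorem coeff_mapDomain_of_injective {f : M → N} (hf : Injective f) (x : MonoidAlgebra R M)
    (m : M) : (mapDomain f x).coeff (f m) = x.coeff m :=
  Finsupp.mapDomain_apply hf x.coeff m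

end MonoidAlgebra

namespace Monoid.CoprodI

variable {ι : Type*} (M : ι → Type*) [∀ i, Monoid (M i)]

def nontrivialLetters (i : ι) : Set (CoprodI M) := of '' {g : M i | g ≠ 1}

variable {M}

section MonoidAlgebra

open MonoidAlgebra

variable {R : Type*} [Semiring R]

theorem coeff_one_mapDomain_of {i : ι} (b : MonoidAlgebra R (M i)) :
    (mapDomain of b : MonoidAlgebra R (CoprodI M)).coeff 1 = b.coeff 1 := by
  rw [← map_one of, coeff_mapDomain_of_injective (of_injective i)]

theorem mapDomain_of_mem_supported_nontrivialLetters {i : ι} {b : MonoidAlgebra R (M i)}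
    (hb : b.coeff 1 = 0) : mapDomain of b ∈ supported R R (nontrivialLetters M i) :=
  mapDomain_mem_supported (mem_supported'.mpr fun g hg ↦ by rwa [show g = 1 from not_not.mp hg])

end MonoidAlgebra

variable [DecidableEq ι] [∀ i, DecidableEq (M i)]

def startingIn (i : ι) : Set (CoprodI M) := {m | (Word.equiv m).fstIdx = some i}

theorem one_notMem_startingIn (i : ι) : (1 : CoprodI M) ∉ startingIn i := by
  simp [startingIn, Word.equiv, Word.fstIdx, Word.empty]

theorem of_mul_mem_startingIn {i : ι} {g : M i} (hg : g ≠ 1) {m : CoprodI M}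
    (hm : m ∉ startingIn i) : of g * m ∈ startingIn i := by
  replace hm : (Word.equiv m).fstIdx ≠ some i := hm
  have : Word.equiv (of g * m) = Word.cons g (Word.equiv m) hm hg := by
    rw [Word.cons_eq_smul]; exact mul_smul (of g) m (Word.empty : Word M)
  change (Word.equiv (of g * m)).fstIdx = some i
  rw [this, Word.fstIdx_cons]

theorem startingIn_subset_compl {i j : ι} (hij : i ≠ j) :
    startingIn (M := M) j ⊆ (startingIn i)ᶜ := fun _ hj hi ↦
  hij (Option.some_injective ι (hi.symm.trans hj))

section MonoidAlgebra

open MonoidAlgebra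

variable {R : Type*} [Semiring R]

theorem coeff_one_eq_zero_of_mem_supported_startingIn {i : ι} {x : MonoidAlgebra R (CoprodI M)}
    (hx : x ∈ supported R R (startingIn i)) : x.coeff 1 = 0 :=
  mem_supported'.mp hx 1 (one_notMem_startingIn i)

theorem one_mem_supported_compl_startingIn (i : ι) :
    (1 : MonoidAlgebra R (CoprodI M)) ∈ supported R R (startingIn i)ᶜ := fun m hm ↦ by
  obtain rfl : m = 1 := Finset.mem_one.mp (support_coeff_one_subset hm)
  exact one_notMem_startingIn i

theorem mul_mem_supported_startingIn {i : ι} {x y : MonoidAlgebra R (CoprodI M)}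
    (hx : x ∈ supported R R (nontrivialLetters M i))
    (hy : y ∈ supported R R (startingIn i)ᶜ) :
    x * y ∈ supported R R (startingIn i) := by
  refine supported_mono ?_ (mul_mem_supported hx hy)
  rintro _ ⟨_, ⟨g, hg, rfl⟩, m, hm, rfl⟩
  exact of_mul_mem_startingIn hg hm

theorem prod_mem_supported_startingIn (n : ℕ) (i : ℕ → ι) (hi : ∀ j < n, i j ≠ i (j + 1))
    (x : ℕ → MonoidAlgebra R (CoprodI M))
    (hx : ∀ j ≤ n, x j ∈ supported R R (nontrivialLetters M (i j))) :
    ((List.range (n + 1)).map x).prod ∈ supported R R (startingIn (i 0)) := by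
  induction n generalizing i x with
  | zero =>
    rw [List.range_one, List.map_singleton, List.prod_singleton, ← mul_one (x 0)]
    exact mul_mem_supported_startingIn (hx 0 le_rfl) (one_mem_supported_compl_startingIn _)
  | succ n ih =>
    rw [List.range_succ_eq_map, List.map_cons, List.map_map, List.prod_cons]
    refine mul_mem_supported_startingIn (hx 0 (Nat.zero_le _)) ?_
    refine supported_mono (startingIn_subset_compl (hi 0 n.succ_pos)) ?_
    exact ih (i ∘ Nat.succ) (fun j hj ↦ hi (j + 1) (by omega)) (x ∘ Nat.succ)
      (fun j hj ↦ hx (j + 1) (by omega))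

end MonoidAlgebra

end Monoid.CoprodI

open Monoid.CoprodI MonoidAlgebra

/-- Let `φ` be the group trace on the group algebra `ℂ(Γ₁ * Γ₂)` of a free product
of two groups. If `a = a₁ ⋯ aₙ` where each `aⱼ` comes from the group algebra of one
of the factors, consecutive factors are different, and `φ(aⱼ) = 0` for all `j`,
then `φ(a) = 0`. -/
theorem groupTrace_alternating_centered_prod_eq_zero
    (Γ : Fin 2 → Type) [∀ i, Group (Γ i)]
    (φ : MonoidAlgebra ℂ (Monoid.CoprodI Γ) → ℂ)
    (hφ : ∀ a : MonoidAlgebra ℂ (Monoid.CoprodI Γ), φ a = a.coeff 1)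
    (n : ℕ) (hn : 0 < n)
    (i : ℕ → Fin 2) (hi : ∀ j, j + 1 < n → i j ≠ i (j + 1))
    (a : ℕ → MonoidAlgebra ℂ (Monoid.CoprodI Γ))
    (ha : ∀ j < n, ∃ b : MonoidAlgebra ℂ (Γ (i j)),
      a j = MonoidAlgebra.mapDomainRingHom ℂ (Monoid.CoprodI.of (M := Γ) (i := i j)) b)
    (hcent : ∀ j < n, φ (a j) = 0) :
    φ (((List.range n).map a).prod) = 0 := by
  classical
  obtain ⟨n, rfl⟩ := Nat.exists_eq_add_one_of_ne_zero hn.ne'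
  have hletters (j : ℕ) (hj : j ≤ n) : a j ∈ supported ℂ ℂ (nontrivialLetters Γ (i j)) := by
    obtain ⟨b, hb⟩ := ha j (by omega)
    have hb1 : b.coeff 1 = 0 := by
      simpa only [hφ, hb, mapDomainRingHom_apply, coeff_one_mapDomain_of] using hcent j (by omega)
    rw [hb]
    exact mapDomain_of_mem_supported_nontrivialLetters hb1
  rw [hφ]
  exact coeff_one_eq_zero_of_mem_supported_startingIn
    (prod_mem_supported_startingIn n i (fun j hj ↦ hi j (by omega)) a hletters)
end

section
/- Given two non-commutative probability spaces (A₁, φ₁) and (A₂, φ₂) (unital ℂ-algebras with unital linear functionals), there exists a unique linear functional φ on the free product algebra A₁ * A₂ with φ(1) = 1 such that φ(a₁⋯aₙ) = 0 whenever aⱼ ∈ A_{i(j)} with i(1) ≠ i(2), i(2) ≠ i(3), …, and φ_{i(j)}(aⱼ) = 0 for all j. -/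
/-!
Existence: let `Λ` be the disjoint union of bases of `ker φ₁` and `ker φ₂`, and let `F` be the
vector space with basis the words in `Λ` whose consecutive letters come from different algebras.
Splitting off a leading letter from the basis of `ker φᵢ` identifies `F` with `Aᵢ ⊗ Fᵢ`, where
`Fᵢ` is spanned by the words not starting with such a letter (via `Aᵢ = ℂ 1 ⊕ ker φᵢ`, with
`1 ⊗ t = t` and `x ⊗ t = x :: t`), so `Aᵢ` acts on `F` by left multiplication on the first
factor. A centered element of `Aᵢ` sends a word not starting in `ker φᵢ` into the span of words
starting in `ker φᵢ`. Hence an alternating product of centered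
elements sends the empty word to a combination of nonempty words, and the vacuum state
`T ↦ ⟨T ∅, ∅⟩` of the representation of `A₁ * A₂` is the required functional.

Uniqueness: `1` and the alternating centered products span `A₁ * A₂`, because their span is stable
under left multiplication by `ιᵢ a = φᵢ a • 1 + ιᵢ (a - φᵢ a • 1)`: a centered letter in front of an
alternating product either extends it, or merges with its first letter `ιᵢ b` into
`ιᵢ (a b)`, which is again split into its mean and a centered part.
-/

lemma List.map_getD_range_length {α : Type*} (l : List α) (d : α) :
    (List.range l.length).map (l.getD · d) = l :=
  List.ext_getElem (by simp) fun j _ h => by simp [h]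

universe u

theorem AlgHom.range_sup_range_eq_top_of_coprod {R A₁ A₂ : Type*} {C : Type u} [CommRing R]
    [Ring A₁] [Algebra R A₁] [Ring A₂] [Algebra R A₂] [Ring C] [Algebra R C]
    (ι₁ : A₁ →ₐ[R] C) (ι₂ : A₂ →ₐ[R] C)
    (hcoprod : ∀ (B : Type u) [Ring B] [Algebra R B] (f₁ : A₁ →ₐ[R] B) (f₂ : A₂ →ₐ[R] B),
      ∃! h : C →ₐ[R] B, h.comp ι₁ = f₁ ∧ h.comp ι₂ = f₂) :
    ι₁.range ⊔ ι₂.range = ⊤ := by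
  set S := ι₁.range ⊔ ι₂.range
  obtain ⟨g, ⟨hg₁, hg₂⟩, -⟩ := hcoprod S
    (ι₁.codRestrict S fun a => le_sup_left (a := ι₁.range) (ι₁.mem_range_self a))
    (ι₂.codRestrict S fun a => le_sup_right (a := ι₁.range) (ι₂.mem_range_self a))
  obtain ⟨h₀, -, huniq⟩ := hcoprod C ι₁ ι₂
  have hg : S.val.comp g = AlgHom.id R C := by
    refine (huniq _ ⟨?_, ?_⟩).trans (huniq _ ⟨ι₁.id_comp, ι₂.id_comp⟩).symm
    · rw [AlgHom.comp_assoc, hg₁]; rfl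
    · rw [AlgHom.comp_assoc, hg₂]; rfl
  refine Algebra.eq_top_iff.mpr fun c => ?_
  have hc : (g c : C) = c := congr($hg c)
  exact hc ▸ (g c).prop

namespace FreeProduct

open Submodule Finsupp

noncomputable section

section Words

variable {κ C : Type*}

def IsAlternatingWord (K : κ → Set C) (l : List (κ × C)) : Prop :=
  l.IsChain (fun p q => p.1 ≠ q.1) ∧ ∀ p ∈ l, p.2 ∈ K p.1

variable {K : κ → Set C}

lemma isAlternatingWord_cons {k : κ} {c : C} {l : List (κ × C)} :
    IsAlternatingWord K ((k, c) :: l) ↔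
      c ∈ K k ∧ (∀ p ∈ l.head?, k ≠ p.1) ∧ IsAlternatingWord K l := by
  simp only [IsAlternatingWord, List.isChain_cons, List.forall_mem_cons]
  tauto

lemma isAlternatingWord_range_map_iff (n : ℕ) (i : ℕ → κ) (a : ℕ → C) :
    IsAlternatingWord K ((List.range n).map fun j => (i j, a j)) ↔
      (∀ j, j + 1 < n → i j ≠ i (j + 1)) ∧ ∀ j < n, a j ∈ K (i j) := by
  simp only [IsAlternatingWord, List.isChain_map, List.isChain_range, List.forall_mem_map,
    List.mem_range]
  exact and_congr ⟨fun h j hj => h j (by omega), fun h j hj => h j (by omega)⟩ Iff.rfl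

def VanishesOnAlternatingWords [Monoid C] {M : Type*} [Zero M] (K : κ → Set C) (f : C → M) :
    Prop :=
  ∀ l, l ≠ [] → IsAlternatingWord K l → f (l.map Prod.snd).prod = 0

lemma vanishesOnAlternatingWords_iff [Monoid C] {M : Type*} [Zero M] (f : C → M) :
    VanishesOnAlternatingWords K f ↔
      ∀ n, 0 < n → ∀ (i : ℕ → κ) (a : ℕ → C), (∀ j, j + 1 < n → i j ≠ i (j + 1)) →
        (∀ j < n, a j ∈ K (i j)) → f ((List.range n).map a).prod = 0 := by
  constructor
  · intro hf n hn i a halt hmem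
    simpa [Function.comp_def] using hf _ (by simpa using Nat.pos_iff_ne_zero.mp hn)
      ((isAlternatingWord_range_map_iff n i a).mpr ⟨halt, hmem⟩)
  · intro hf l hl hK
    obtain ⟨d⟩ : Nonempty (κ × C) := ⟨l.head hl⟩
    rw [← List.map_getD_range_length l d] at hK
    obtain ⟨halt, hmem⟩ := (isAlternatingWord_range_map_iff _ (fun j => (l.getD j d).1)
      (fun j => (l.getD j d).2)).mp hK
    have := hf l.length (List.length_pos_iff.mpr hl) _ _ halt hmem
    rwa [← Function.comp_def, ← List.map_map, List.map_getD_range_length] at this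

section Spanning

variable {R : Type*} [CommRing R] [Ring C] [Algebra R C]

def alternatingProducts (K : κ → Set C) : Set C :=
  {x | ∃ l, IsAlternatingWord K l ∧ (l.map Prod.snd).prod = x}

lemma eq_of_vanishesOnAlternatingWords (hspan : span R (alternatingProducts K) = ⊤)
    {M : Type*} [AddCommGroup M] [Module R M] {ψ ψ' : C →ₗ[R] M} (h1 : ψ 1 = ψ' 1)
    (hψ : VanishesOnAlternatingWords K ψ) (hψ' : VanishesOnAlternatingWords K ψ') : ψ = ψ' := by
  refine LinearMap.ext_on hspan ?_
  rintro _ ⟨l, hl, rfl⟩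
  obtain rfl | hne := eq_or_ne l []
  · simpa using h1
  · rw [hψ l hne hl, hψ' l hne hl]

variable {S : κ → Subalgebra R C}
  (hKS : ∀ k, K k ⊆ S k) (hSK : ∀ k, ∀ s ∈ S k, ∃ r : R, s - r • 1 ∈ K k)
include hKS hSK

lemma mul_mem_span_alternatingProducts {k : κ} {s : C} (hs : s ∈ S k) {l : List (κ × C)}
    (hl : IsAlternatingWord K l) :
    s * (l.map Prod.snd).prod ∈ span R (alternatingProducts K) := by
  have hprod {l'} (hl' : IsAlternatingWord K l') :
      (l'.map Prod.snd).prod ∈ span R (alternatingProducts K) :=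
    subset_span ⟨l', hl', rfl⟩
  suffices hcent : ∀ x ∈ K k, x * (l.map Prod.snd).prod ∈ span R (alternatingProducts K) by
    obtain ⟨r, hr⟩ := hSK k s hs
    rw [← sub_add_cancel s (r • 1), add_mul, smul_one_mul]
    exact add_mem (hcent _ hr) (smul_mem _ r (hprod hl))
  intro x hx
  match l, hl with
  | [], hl => exact hprod (l' := [(k, x)]) (isAlternatingWord_cons.mpr ⟨hx, by simp, hl⟩)
  | (k', y) :: t, hl =>
    obtain ⟨hy, hhead, ht⟩ := isAlternatingWord_cons.mp hl
    by_cases hk : k' = k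
    · subst hk
      obtain ⟨r, hr⟩ := hSK k' (x * y) (mul_mem (hKS k' hx) (hKS k' hy))
      simp only [List.map_cons, List.prod_cons, ← mul_assoc]
      rw [← sub_add_cancel (x * y) (r • 1), add_mul, smul_one_mul]
      exact add_mem (hprod (l' := (k', _) :: t) (isAlternatingWord_cons.mpr ⟨hr, hhead, ht⟩))
        (smul_mem _ r (hprod ht))
    · exact hprod (l' := (k, x) :: (k', y) :: t)
        (isAlternatingWord_cons.mpr ⟨hx, by simpa [eq_comm] using hk, hl⟩)

theorem span_alternatingProducts_eq_top (hS : ⨆ k, S k = ⊤) :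
    span R (alternatingProducts K) = ⊤ := by
  set D := span R (alternatingProducts K)
  have hmul (c : C) : ∀ x ∈ D, c * x ∈ D := by
    refine Algebra.iSup_induction S (motive := fun c => ∀ x ∈ D, c * x ∈ D)
      (hS ▸ Algebra.mem_top) ?_ ?_ ?_ ?_
    · intro k s hs x hx
      refine (span_le (p := D.comap (LinearMap.mulLeft R s))).mpr ?_ hx
      rintro _ ⟨l, hl, rfl⟩
      exact mul_mem_span_alternatingProducts hKS hSK hs hl
    · exact fun a b ha hb x hx => by simpa only [add_mul] using add_mem (ha x hx) (hb x hx)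
    · exact fun a b ha hb x hx => by simpa only [mul_assoc] using ha _ (hb x hx)
    · exact fun r x hx => by simpa [Algebra.algebraMap_eq_smul_one] using smul_mem _ r hx
  refine eq_top_iff'.mpr fun c => ?_
  simpa using hmul c 1 (subset_span ⟨[], ⟨List.IsChain.nil, by simp⟩, rfl⟩)

end Spanning

end Words

section Fock

variable {Λ κ : Type*} (σ : Λ → κ)

abbrev Word := {l : List Λ // l.IsChain (fun x y => σ x ≠ σ y)}

variable {σ}

def Word.nil : Word σ := ⟨[], .nil⟩

def Word.headColour (w : Word σ) : Option κ := w.1.head?.map σ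

def Word.cons (x : Λ) (t : Word σ) (h : t.headColour ≠ some (σ x)) : Word σ :=
  ⟨x :: t.1, List.isChain_cons.mpr
    ⟨fun y hy hxy => h (by simp [Word.headColour, Option.mem_def.mp hy, hxy]), t.2⟩⟩

@[simp] lemma Word.headColour_cons (x : Λ) (t : Word σ) (h) :
    (Word.cons x t h).headColour = some (σ x) := rfl

@[simp] lemma Word.headColour_nil : (Word.nil : Word σ).headColour = none := rfl

lemma Word.headColour_ne_or_eq_cons (w : Word σ) (k : κ) :
    w.headColour ≠ some k ∨ ∃ (x : {x // σ x = k}) (t : Word σ) (ht : t.headColour ≠ some k),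
      w = Word.cons x.1 t (by rwa [x.2]) := by
  obtain ⟨_ | ⟨x, t⟩, h⟩ := w
  · simp [Word.headColour]
  · by_cases hx : σ x = k
    · refine .inr ⟨⟨x, hx⟩, ⟨t, h.tail⟩, fun ht => ?_, rfl⟩
      obtain ⟨y, hy, hyk⟩ := Option.map_eq_some_iff.mp ht
      exact (List.isChain_cons.mp h).1 y hy (hx.trans hyk.symm)
    · exact .inl (by simpa [Word.headColour] using hx)

variable (σ) (𝕜 : Type*) [Field 𝕜]

abbrev Fock := Word σ →₀ 𝕜

def startingWith (k : κ) : Submodule 𝕜 (Fock σ 𝕜) :=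
  supported 𝕜 𝕜 {w | w.headColour = some k}

def notStartingWith (k : κ) : Submodule 𝕜 (Fock σ 𝕜) :=
  supported 𝕜 𝕜 {w | w.headColour ≠ some k}

variable {σ 𝕜}

lemma startingWith_le_notStartingWith {k k' : κ} (h : k ≠ k') :
    startingWith σ 𝕜 k ≤ notStartingWith σ 𝕜 k' :=
  supported_mono fun w (hw : w.headColour = some k) => by simp [hw, h]

lemma apply_nil_eq_zero_of_mem_startingWith {k : κ} {v : Fock σ 𝕜}
    (hv : v ∈ startingWith σ 𝕜 k) : v Word.nil = 0 :=
  (mem_supported' 𝕜 v).mp hv _ (by simp)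

section OneAlgebra

variable {A : Type*} [Ring A] [Algebra 𝕜 A] {φ : A →ₗ[𝕜] 𝕜} (hφ : φ 1 = 1)

def center : A →ₗ[𝕜] LinearMap.ker φ :=
  LinearMap.codRestrict _ (LinearMap.id - φ.smulRight 1) fun a => by simp [hφ]

@[simp] lemma coe_center (a : A) : (center hφ a : A) = a - φ a • 1 := rfl

@[simp] lemma center_one : center hφ 1 = 0 := by
  ext
  simp [hφ]

@[simp] lemma center_coe (y : LinearMap.ker φ) : center hφ (y : A) = y := by
  ext
  simp [LinearMap.mem_ker.mp y.2]

include hφ in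
lemma ext_of_one_of_ker {M : Type*} [AddCommGroup M] [Module 𝕜 M] {f g : A →ₗ[𝕜] M}
    (h1 : f 1 = g 1)
    (hker : f ∘ₗ (LinearMap.ker φ).subtype = g ∘ₗ (LinearMap.ker φ).subtype) : f = g := by
  ext a
  simpa [h1] using congr($hker (center hφ a))

variable {k : κ} (b : Module.Basis {x // σ x = k} 𝕜 (LinearMap.ker φ))

open Classical in
def singleCons (x : {x // σ x = k}) (t : Word σ) : Fock σ 𝕜 :=
  if h : t.headColour ≠ some (σ x) then single (Word.cons x.1 t h) 1 else 0

/-- For `t` not starting with colour `k`, this is `a ↦ a ⊗ t` under the identification of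
`A ⊗ 𝕜 t` with the span of `t` and the words `x :: t`: the basis vector `b x` of `ker φ` goes to
`x :: t` and `1` goes to `t`. -/
def prepend (t : Word σ) : A →ₗ[𝕜] Fock σ 𝕜 :=
  φ.smulRight (single t 1) +
    linearCombination 𝕜 (singleCons · t) ∘ₗ b.repr.toLinearMap ∘ₗ center hφ

lemma prepend_one (t : Word σ) : prepend hφ b t 1 = single t 1 := by
  simp [prepend, hφ]

lemma prepend_basis {t : Word σ} (ht : t.headColour ≠ some k) (x : {x // σ x = k}) :
    prepend hφ b t (b x) = single (Word.cons x.1 t (by rwa [x.2])) 1 := by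
  have hx : t.headColour ≠ some (σ x) := by rwa [x.2]
  simp [prepend, singleCons, hx, LinearMap.mem_ker.mp (b x).2]

open Classical in
/-- A word `x :: t` whose first letter has colour `k` is read as `b x ⊗ t`, any other word `w`
as `1 ⊗ w`. -/
def actionOnWord : Word σ → A →ₗ[𝕜] Fock σ 𝕜
  | ⟨x :: t, h⟩ =>
    if hx : σ x = k then prepend hφ b ⟨t, h.tail⟩ ∘ₗ LinearMap.mulRight 𝕜 (b ⟨x, hx⟩ : A)
    else prepend hφ b ⟨x :: t, h⟩
  | ⟨[], h⟩ => prepend hφ b ⟨[], h⟩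

lemma actionOnWord_of_headColour_ne {w : Word σ} (hw : w.headColour ≠ some k) :
    actionOnWord hφ b w = prepend hφ b w := by
  obtain ⟨_ | ⟨x, t⟩, h⟩ := w
  · rfl
  · have hx : σ x ≠ k := fun hx => hw (by simp [Word.headColour, hx])
    simp [actionOnWord, hx]

lemma actionOnWord_cons (x : {x // σ x = k}) (t : Word σ) (ht : t.headColour ≠ some (σ x)) :
    actionOnWord hφ b (Word.cons x.1 t ht) =
      prepend hφ b t ∘ₗ LinearMap.mulRight 𝕜 (b x : A) := by
  simp [actionOnWord, Word.cons, x.2]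

def action : A →ₗ[𝕜] Module.End 𝕜 (Fock σ 𝕜) :=
  (linearCombination 𝕜 (actionOnWord hφ b)).flip

lemma action_single (a : A) (w : Word σ) (c : 𝕜) :
    action hφ b a (single w c) = c • actionOnWord hφ b w a := by
  simp [action]

lemma action_prepend {t : Word σ} (ht : t.headColour ≠ some k) (a y : A) :
    action hφ b a (prepend hφ b t y) = prepend hφ b t (a * y) := by
  have : action hφ b a ∘ₗ prepend hφ b t = prepend hφ b t ∘ₗ LinearMap.mulLeft 𝕜 a := by
    refine ext_of_one_of_ker hφ ?_ (b.ext fun x => ?_)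
    · simp [prepend_one, action_single, actionOnWord_of_headColour_ne hφ b ht]
    · simp [prepend_basis hφ b ht, action_single, actionOnWord_cons]
  exact congr($this y)

lemma actionOnWord_one (w : Word σ) : actionOnWord hφ b w 1 = single w 1 := by
  obtain hw | ⟨x, t, ht, rfl⟩ := w.headColour_ne_or_eq_cons k
  · rw [actionOnWord_of_headColour_ne hφ b hw, prepend_one]
  · simp [actionOnWord_cons, prepend_basis hφ b ht]

lemma actionOnWord_mul (w : Word σ) (a a' : A) :
    actionOnWord hφ b w (a * a') = action hφ b a (actionOnWord hφ b w a') := by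
  obtain hw | ⟨x, t, ht, rfl⟩ := w.headColour_ne_or_eq_cons k
  · rw [actionOnWord_of_headColour_ne hφ b hw, action_prepend hφ b hw]
  · simp [actionOnWord_cons, action_prepend hφ b ht, mul_assoc]

def actionAlgHom : A →ₐ[𝕜] Module.End 𝕜 (Fock σ 𝕜) :=
  AlgHom.ofLinearMap (action hφ b)
    (Finsupp.basisSingleOne.ext fun w => by simp [action_single, actionOnWord_one])
    (fun a a' => Finsupp.basisSingleOne.ext fun w => by simp [action_single, actionOnWord_mul])

@[simp] lemma actionAlgHom_apply (a : A) : actionAlgHom hφ b a = action hφ b a := rfl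

lemma prepend_mem_startingWith {t : Word σ} (ht : t.headColour ≠ some k) {y : A}
    (hy : φ y = 0) : prepend hφ b t y ∈ startingWith σ 𝕜 k := by
  set v := fun x : {x // σ x = k} => singleCons (𝕜 := 𝕜) x t
  have hv : Set.range v ⊆ startingWith σ 𝕜 k := by
    rintro _ ⟨x, rfl⟩
    have hx : t.headColour ≠ some (σ x) := by rwa [x.2]
    simpa [v, singleCons, hx, startingWith] using
      single_mem_supported 𝕜 (1 : 𝕜) (s := {w : Word σ | w.headColour = some k}) (by simp [x.2])
  have hrange := range_linearCombination 𝕜 (v := v)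
  simpa [prepend, hy] using span_le.mpr hv (hrange ▸ LinearMap.mem_range_self _ _)

lemma action_mem_startingWith {y : A} (hy : φ y = 0) {v : Fock σ 𝕜}
    (hv : v ∈ notStartingWith σ 𝕜 k) : action hφ b y v ∈ startingWith σ 𝕜 k := by
  rw [notStartingWith, supported_eq_span_single] at hv
  refine (span_le (p := (startingWith σ 𝕜 k).comap (action hφ b y))).mpr ?_ hv
  rintro _ ⟨w, hw, rfl⟩
  simpa [action_single, actionOnWord_of_headColour_ne hφ b hw] using
    prepend_mem_startingWith hφ b hw hy

end OneAlgebra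

theorem apply_prod_mem_startingWith {C : Type*} [Monoid C]
    (ρ : C →* Module.End 𝕜 (Fock σ 𝕜)) {K : κ → Set C}
    (hρ : ∀ k, ∀ c ∈ K k, ∀ v ∈ notStartingWith σ 𝕜 k, ρ c v ∈ startingWith σ 𝕜 k)
    {k : κ} {c : C} {t : List (κ × C)} (hl : IsAlternatingWord K ((k, c) :: t)) :
    ρ (((k, c) :: t).map Prod.snd).prod (single Word.nil 1) ∈ startingWith σ 𝕜 k := by
  induction t generalizing k c with
  | nil =>
    simpa using hρ k c (isAlternatingWord_cons.mp hl).1 _ (single_mem_supported 𝕜 1 (by simp))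
  | cons p t ih =>
    obtain ⟨hc, hhead, ht⟩ := isAlternatingWord_cons.mp hl
    rw [List.map_cons, List.prod_cons, map_mul, Module.End.mul_apply]
    exact hρ k c hc _ (startingWith_le_notStartingWith (hhead p rfl).symm (ih ht))

variable (σ 𝕜) in
def vacuumState : Module.End 𝕜 (Fock σ 𝕜) →ₗ[𝕜] 𝕜 :=
  lapply Word.nil ∘ₗ LinearMap.applyₗ (single Word.nil 1)

@[simp] lemma vacuumState_apply (T : Module.End 𝕜 (Fock σ 𝕜)) :
    vacuumState σ 𝕜 T = T (single Word.nil 1) Word.nil := rfl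

end Fock

section TwoAlgebras

variable {𝕜 A₁ A₂ C : Type} [Field 𝕜] [Ring A₁] [Algebra 𝕜 A₁] [Ring A₂] [Algebra 𝕜 A₂]
  [Ring C] [Algebra 𝕜 C] (ι₁ : A₁ →ₐ[𝕜] C) (ι₂ : A₂ →ₐ[𝕜] C)
  (φ₁ : A₁ →ₗ[𝕜] 𝕜) (φ₂ : A₂ →ₗ[𝕜] 𝕜)

def centeredLetters : Fin 2 → Set C :=
  ![ι₁ '' (LinearMap.ker φ₁ : Set A₁), ι₂ '' (LinearMap.ker φ₂ : Set A₂)]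

lemma mem_centeredLetters_iff (i : Fin 2) (c : C) :
    c ∈ centeredLetters ι₁ ι₂ φ₁ φ₂ i ↔
      (i = 0 ∧ ∃ b, c = ι₁ b ∧ φ₁ b = 0) ∨ (i = 1 ∧ ∃ b, c = ι₂ b ∧ φ₂ b = 0) := by
  fin_cases i <;> simp [centeredLetters, eq_comm, and_comm]

lemma span_alternatingProducts_centeredLetters (hφ₁ : φ₁ 1 = 1) (hφ₂ : φ₂ 1 = 1)
    (hgen : ι₁.range ⊔ ι₂.range = ⊤) :
    span 𝕜 (alternatingProducts (centeredLetters ι₁ ι₂ φ₁ φ₂)) = ⊤ := by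
  refine span_alternatingProducts_eq_top (S := ![ι₁.range, ι₂.range]) ?_ ?_ ?_
  · intro k
    fin_cases k <;> rintro _ ⟨a, -, rfl⟩ <;> exact ⟨a, rfl⟩
  · intro k
    fin_cases k <;> rintro _ ⟨a, rfl⟩
    · exact ⟨φ₁ a, a - φ₁ a • 1, by simp [hφ₁], by simp⟩
    · exact ⟨φ₂ a, a - φ₂ a • 1, by simp [hφ₂], by simp⟩
  · rw [eq_top_iff, ← hgen]
    exact sup_le (le_iSup (fun k => ![ι₁.range, ι₂.range] k) 0)
      (le_iSup (fun k => ![ι₁.range, ι₂.range] k) 1)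

abbrev Letter := Module.Basis.ofVectorSpaceIndex 𝕜 (LinearMap.ker φ₁) ⊕
  Module.Basis.ofVectorSpaceIndex 𝕜 (LinearMap.ker φ₂)

def colour : Letter φ₁ φ₂ → Fin 2 := Sum.elim (fun _ => 0) (fun _ => 1)

def basis₁ : Module.Basis {x // colour φ₁ φ₂ x = 0} 𝕜 (LinearMap.ker φ₁) :=
  (Module.Basis.ofVectorSpace 𝕜 _).reindex
    ((Equiv.subtypeEquivRight (by rintro (_ | _) <;> simp [colour])).trans Equiv.sumIsLeft).symm

def basis₂ : Module.Basis {x // colour φ₁ φ₂ x = 1} 𝕜 (LinearMap.ker φ₂) :=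
  (Module.Basis.ofVectorSpace 𝕜 _).reindex
    ((Equiv.subtypeEquivRight (by rintro (_ | _) <;> simp [colour])).trans Equiv.sumIsRight).symm

lemma vanishesOnAlternatingWords_vacuumState_comp {hφ₁ : φ₁ 1 = 1} {hφ₂ : φ₂ 1 = 1}
    (ρ : C →ₐ[𝕜] Module.End 𝕜 (Fock (colour φ₁ φ₂) 𝕜))
    (hρ₁ : ρ.comp ι₁ = actionAlgHom hφ₁ (basis₁ φ₁ φ₂))
    (hρ₂ : ρ.comp ι₂ = actionAlgHom hφ₂ (basis₂ φ₁ φ₂)) :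
    VanishesOnAlternatingWords (centeredLetters ι₁ ι₂ φ₁ φ₂)
      (vacuumState _ 𝕜 ∘ₗ ρ.toLinearMap) := by
  intro l hl halt
  obtain ⟨⟨k, c⟩, t, rfl⟩ := List.exists_cons_of_ne_nil hl
  refine apply_nil_eq_zero_of_mem_startingWith
    (apply_prod_mem_startingWith ρ.toMonoidHom (fun k c hc v hv => ?_) halt)
  fin_cases k <;> obtain ⟨a, ha, rfl⟩ := hc
  · simpa [← AlgHom.comp_apply, hρ₁] using action_mem_startingWith hφ₁ (basis₁ φ₁ φ₂) ha hv
  · simpa [← AlgHom.comp_apply, hρ₂] using action_mem_startingWith hφ₂ (basis₂ φ₁ φ₂) ha hv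

theorem existsUnique_state_vanishesOnAlternatingWords
    (hcoprod : ∀ (B : Type) [Ring B] [Algebra 𝕜 B] (f₁ : A₁ →ₐ[𝕜] B) (f₂ : A₂ →ₐ[𝕜] B),
      ∃! h : C →ₐ[𝕜] B, h.comp ι₁ = f₁ ∧ h.comp ι₂ = f₂)
    (hφ₁ : φ₁ 1 = 1) (hφ₂ : φ₂ 1 = 1) :
    ∃! φ : C →ₗ[𝕜] 𝕜, φ 1 = 1 ∧ VanishesOnAlternatingWords (centeredLetters ι₁ ι₂ φ₁ φ₂) φ := by
  obtain ⟨ρ, ⟨hρ₁, hρ₂⟩, -⟩ := hcoprod (Module.End 𝕜 (Fock (colour φ₁ φ₂) 𝕜))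
    (actionAlgHom hφ₁ (basis₁ φ₁ φ₂)) (actionAlgHom hφ₂ (basis₂ φ₁ φ₂))
  have hspan := span_alternatingProducts_centeredLetters ι₁ ι₂ φ₁ φ₂ hφ₁ hφ₂
    (ι₁.range_sup_range_eq_top_of_coprod ι₂ hcoprod)
  refine ⟨vacuumState _ 𝕜 ∘ₗ ρ.toLinearMap, ⟨by simp, ?_⟩, fun ψ hψ => ?_⟩
  · exact vanishesOnAlternatingWords_vacuumState_comp ι₁ ι₂ φ₁ φ₂ ρ hρ₁ hρ₂
  · exact eq_of_vanishesOnAlternatingWords hspan (by simp [hψ.1]) hψ.2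
      (vanishesOnAlternatingWords_vacuumState_comp ι₁ ι₂ φ₁ φ₂ ρ hρ₁ hρ₂)

end TwoAlgebras

end

end FreeProduct

/-- Given two non-commutative probability spaces `(A₁, φ₁)` and `(A₂, φ₂)` and a
free product (coproduct) `C` of the unital `ℂ`-algebras `A₁`, `A₂` (characterized
by its universal property, with canonical embeddings `ι₁`, `ι₂`), there is a unique
linear functional `φ` on `C` with `φ(1) = 1` that vanishes on all alternating
products of centered elements. -/
theorem freeProduct_state_exists_unique
    (A₁ A₂ C : Type) [Ring A₁] [Algebra ℂ A₁] [Ring A₂] [Algebra ℂ A₂]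
    [Ring C] [Algebra ℂ C]
    (ι₁ : A₁ →ₐ[ℂ] C) (ι₂ : A₂ →ₐ[ℂ] C)
    (hcoprod : ∀ (B : Type) [Ring B] [Algebra ℂ B] (f₁ : A₁ →ₐ[ℂ] B) (f₂ : A₂ →ₐ[ℂ] B),
      ∃! h : C →ₐ[ℂ] B, h.comp ι₁ = f₁ ∧ h.comp ι₂ = f₂)
    (φ₁ : A₁ →ₗ[ℂ] ℂ) (hφ₁ : φ₁ 1 = 1) (φ₂ : A₂ →ₗ[ℂ] ℂ) (hφ₂ : φ₂ 1 = 1) :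
    ∃! φ : C →ₗ[ℂ] ℂ, φ 1 = 1 ∧
      ∀ (n : ℕ), 0 < n → ∀ (i : ℕ → Fin 2) (a : ℕ → C),
        (∀ j, j + 1 < n → i j ≠ i (j + 1)) →
        (∀ j < n,
          (i j = 0 ∧ ∃ b : A₁, a j = ι₁ b ∧ φ₁ b = 0) ∨
          (i j = 1 ∧ ∃ b : A₂, a j = ι₂ b ∧ φ₂ b = 0)) →
        φ (((List.range n).map a).prod) = 0 := by
  simpa only [FreeProduct.vanishesOnAlternatingWords_iff, FreeProduct.mem_centeredLetters_iff]
    using FreeProduct.existsUnique_state_vanishesOnAlternatingWords ι₁ ι₂ φ₁ φ₂ hcoprod hφ₁ hφ₂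
end

section
/- Let ℓ be the left creation operator on the full Fock space F(ℂ) associated to a unit vector e, let Ω be the vacuum vector, and let φ(a) = ⟨Ω, aΩ⟩. Then for every k ≥ 0, φ((ℓ + ℓ*)^k) equals the number of non-crossing pairings of the set {1, …, k}. In particular this vanishes for k odd and equals the Catalan number C_{k/2} for k even. -/
/-- The full Fock space `F(ℂ)`, with orthonormal basis `Ω, e, e⊗e, …` indexed by `ℕ`. -/
noncomputable abbrev FockC : Type := lp (fun _ : ℕ => ℂ) 2

/-- `P` is a pairing of `{1, …, k}` (modelled as `Fin k`): a partition into
two-element blocks. -/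
def IsPairing {k : ℕ} (P : Finset (Finset (Fin k))) : Prop :=
  (∀ B ∈ P, B.card = 2) ∧ ∀ x : Fin k, ∃! B, B ∈ P ∧ x ∈ B

/-- A pairing is non-crossing if there are no `a < b < c < d` with `{a, c}` and
`{b, d}` both blocks. -/
def IsNonCrossingPairing {k : ℕ} (P : Finset (Finset (Fin k))) : Prop :=
  IsPairing P ∧
    ¬ ∃ a b c d : Fin k, a < b ∧ b < c ∧ c < d ∧
      ({a, c} : Finset (Fin k)) ∈ P ∧ ({b, d} : Finset (Fin k)) ∈ P

/-!
Since `ℓ` and `ℓ*` shift coordinates up and down, the `n`-th coordinate of `(ℓ + ℓ*)^k Ω` is the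
number of up/down paths with `k` steps from level `0` to level `n` that never go below `0`; the
vacuum moment therefore counts Dyck paths of length `k`. A non-crossing pairing gives the Dyck path
that goes up at the first element of each block and down at the second, and the pairing is
recovered from the path by matching every up-step with the first later step that goes below the
level it climbs to. Finally the path counts obey the ballot recursion, whose solution
`C(2m, m) - C(2m, m + 1)` is the Catalan number.
-/

open Finset

def step (b : Bool) : ℤ := if b then 1 else -1

@[simp] lemma step_true : step true = 1 := rfl

@[simp] lemma step_false : step false = -1 := rfl

lemma sum_step_eq_card_sub_card {ι : Type*} (f : ι → Bool) (A : Finset ι) :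
    ∑ i ∈ A, step (f i) = #{i ∈ A | f i} - #{i ∈ A | f i = false} := by
  simp only [step, sum_ite, sum_const, nsmul_eq_mul, mul_one, mul_neg]
  simp [sub_eq_add_neg]

lemma sum_step_nonneg_of_injOn {ι : Type*} (f : ι → Bool) {A : Finset ι} {g : ι → ι}
    (hg : Set.InjOn g A) (hmaps : ∀ i ∈ A, f i = false → g i ∈ A ∧ f (g i) = true) :
    0 ≤ ∑ i ∈ A, step (f i) := by
  have : #{i ∈ A | f i = false} ≤ #{i ∈ A | f i} := by
    refine card_le_card_of_injOn g (fun i hi => ?_) (hg.mono fun i hi => (mem_filter.1 hi).1)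
    obtain ⟨hiA, hi⟩ := mem_filter.1 hi
    simpa using hmaps i hiA hi
  rw [sum_step_eq_card_sub_card]
  omega

lemma sum_step_eq_zero_of_injOn {ι : Type*} (f : ι → Bool) {A : Finset ι} {g : ι → ι}
    (hg : Set.InjOn g A) (hmaps : ∀ i ∈ A, g i ∈ A ∧ f (g i) = !f i) :
    ∑ i ∈ A, step (f i) = 0 := by
  have hf := sum_step_nonneg_of_injOn f hg fun i hi hfi => by simpa [hfi] using hmaps i hi
  have hnf := sum_step_nonneg_of_injOn (fun i => !f i) hg fun i hi hfi => by
    simp only [Bool.not_eq_false'] at hfi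
    simpa [hfi] using hmaps i hi
  have hneg : ∑ i ∈ A, step (!f i) = -∑ i ∈ A, step (f i) := by
    rw [← sum_neg_distrib]
    exact sum_congr rfl fun i _ => by cases f i <;> rfl
  linarith

section Paths

variable {k : ℕ}

def height (f : Fin k → Bool) (t : ℕ) : ℤ := ∑ i with i.val < t, step (f i)

lemma height_min (f : Fin k → Bool) (t : ℕ) : height f (min t k) = height f t := by
  unfold height; congr 1; ext i; simp

lemma height_sub_height (f : Fin k → Bool) {s t : ℕ} (hst : s ≤ t) :
    height f t - height f s = ∑ i with s ≤ i.val ∧ i.val < t, step (f i) := by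
  simp only [height, sum_filter, ← sum_sub_distrib]
  refine sum_congr rfl fun i _ => ?_
  split_ifs <;> omega

lemma height_succ (f : Fin k → Bool) (i : Fin k) :
    height f (i + 1) = height f i + step (f i) := by
  have h := height_sub_height f (Nat.le_succ i)
  have hi : ({j | i.val ≤ j.val ∧ j.val < i + 1} : Finset (Fin k)) = {i} := by
    ext j; simp [Fin.ext_iff]; omega
  rw [hi, sum_singleton] at h
  linarith

lemma height_snoc (g : Fin k → Bool) (b : Bool) (t : ℕ) :
    height (Fin.snoc g b : Fin (k + 1) → Bool) t = height g t + if k < t then step b else 0 := by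
  simp [height, sum_filter, Fin.sum_univ_castSucc]

lemma height_eq_card_sub_card (f : Fin k → Bool) :
    height f k = #{i | f i} - #{i | f i = false} := by
  simp [height, sum_step_eq_card_sub_card]

open scoped Classical in
noncomputable def dyckPaths (k : ℕ) (n : ℤ) : Finset (Fin k → Bool) :=
  {f | (∀ t, 0 ≤ height f t) ∧ height f k = n}

lemma mem_dyckPaths {f : Fin k → Bool} {n : ℤ} :
    f ∈ dyckPaths k n ↔ (∀ t, 0 ≤ height f t) ∧ height f k = n := by
  simp [dyckPaths]

lemma dyckPaths_eq_empty {n : ℤ} (hn : n < 0) : dyckPaths k n = ∅ :=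
  eq_empty_of_forall_notMem fun f hf => by
    obtain ⟨hnonneg, hend⟩ := mem_dyckPaths.1 hf
    linarith [hnonneg k]

lemma card_dyckPaths_zero (n : ℤ) : #(dyckPaths 0 n) = if n = 0 then 1 else 0 := by
  have hheight (f : Fin 0 → Bool) (t : ℕ) : height f t = 0 := by simp [height]
  split_ifs with hn
  · exact card_eq_one.2 ⟨finZeroElim, by ext f; simp [mem_dyckPaths, hheight, hn, funext_iff]⟩
  · exact card_eq_zero.2 (by ext f; simp [mem_dyckPaths, hheight, Ne.symm hn])

lemma snoc_mem_dyckPaths {g : Fin k → Bool} {b : Bool} {n : ℤ} :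
    (Fin.snoc g b : Fin (k + 1) → Bool) ∈ dyckPaths (k + 1) n ↔
      g ∈ dyckPaths k (n - step b) ∧ 0 ≤ n := by
  have hlast : height (Fin.snoc g b : Fin (k + 1) → Bool) (k + 1) = height g k + step b := by
    rw [height_snoc, ← height_min g, min_eq_right (Nat.le_succ k), if_pos (Nat.lt_succ_self k)]
  rw [mem_dyckPaths, mem_dyckPaths, hlast]
  constructor
  · rintro ⟨hnonneg, hend⟩
    refine ⟨⟨fun t => ?_, by linarith⟩, hend ▸ hlast ▸ hnonneg (k + 1)⟩
    have := hnonneg (min t k)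
    rwa [height_snoc, if_neg (by omega), add_zero, height_min] at this
  · rintro ⟨⟨hnonneg, hend⟩, hn⟩
    refine ⟨fun t => ?_, by rw [hend]; ring⟩
    rw [height_snoc]
    split_ifs with ht
    · rw [← height_min g, min_eq_right ht.le, hend]; linarith
    · simpa using hnonneg t

lemma card_dyckPaths_succ {n : ℤ} (hn : 0 ≤ n) :
    #(dyckPaths (k + 1) n) = #(dyckPaths k (n - 1)) + #(dyckPaths k (n + 1)) := by
  have hcount (m : ℕ) (D : Finset (Fin m → Bool)) : #D = ∑ f, if f ∈ D then 1 else 0 := by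
    rw [← card_filter, filter_mem_eq_inter, univ_inter]
  have hsnoc (b : Bool) (g : Fin k → Bool) :
      (Fin.snocEquiv fun _ => Bool) (b, g) = Fin.snoc g b := rfl
  rw [hcount, ← (Fin.snocEquiv fun _ => Bool).sum_comp, Fintype.sum_prod_type, Fintype.sum_bool]
  simp only [hsnoc, snoc_mem_dyckPaths, hn, and_true, step_true, step_false, sub_neg_eq_add]
  rw [hcount k, hcount k]

lemma dyckPaths_zero_eq_empty_of_odd (hk : Odd k) : dyckPaths k 0 = ∅ := by
  refine eq_empty_of_forall_notMem fun f hf => Nat.not_even_iff_odd.2 hk ?_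
  have hend := (mem_dyckPaths.1 hf).2
  have hsplit := card_filter_add_card_filter_not (s := univ) (fun i : Fin k => f i)
  rw [height_eq_card_sub_card] at hend
  simp only [card_univ, Fintype.card_fin, Bool.not_eq_true] at hsplit
  exact ⟨#{i | f i}, by omega⟩

/-- The ballot numbers. The case `n = -1` is included so that the induction closes. -/
lemma card_dyckPaths_eq_choose_sub_choose (k : ℕ) {n : ℤ} (hn : -1 ≤ n) {u : ℕ}
    (hu : k + n = 2 * u) : (#(dyckPaths k n) : ℤ) = k.choose u - k.choose (u + 1) := by
  induction k generalizing n u with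
  | zero =>
    obtain rfl : n = 2 * u := by omega
    rcases u with _ | u <;> simp [card_dyckPaths_zero]
    omega
  | succ k ih =>
    rcases hn.eq_or_lt with rfl | hn
    · obtain rfl : k = 2 * u := by omega
      simp [dyckPaths_eq_empty, Nat.choose_symm_half]
    obtain ⟨v, rfl⟩ : ∃ v, u = v + 1 := ⟨u - 1, by omega⟩
    rw [card_dyckPaths_succ (by omega), Nat.cast_add, ih (n := n - 1) (u := v) (by omega)
      (by push_cast at hu ⊢; omega), ih (n := n + 1) (u := v + 1) (by omega)
      (by push_cast at hu ⊢; omega), Nat.choose_succ_succ', Nat.choose_succ_succ']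
    push_cast
    ring

lemma choose_sub_choose_succ_eq_div {K : Type*} [Field K] [CharZero K] (m : ℕ) :
    ((2 * m).choose m : K) - (2 * m).choose (m + 1) = (2 * m).choose m / (m + 1) := by
  have h : ((2 * m).choose (m + 1) : K) * (m + 1) = (2 * m).choose m * m := by
    have := Nat.choose_succ_right_eq (2 * m) m
    rw [show 2 * m - m = m by omega] at this
    exact_mod_cast this
  field_simp
  linear_combination -h

end Paths

section Matching

variable {k : ℕ} {f : Fin k → Bool}

/-- The down-step `j` closes the up-step `i`: it is the first step after `i` that takes the path
below the level `i` climbed to. -/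
structure IsMatch (f : Fin k → Bool) (i j : Fin k) : Prop where
  up : f i = true
  lt : i < j
  drop : height f (j + 1) < height f (i + 1)
  le_height : ∀ t : ℕ, i < t → t ≤ j → height f (i + 1) ≤ height f t

namespace IsMatch

variable {i j : Fin k}

lemma down (h : IsMatch f i j) : f j = false := by
  have hj := height_succ f j
  have := h.le_height j h.lt le_rfl
  cases hfj : f j
  · rfl
  · rw [hfj, step_true] at hj
    linarith [h.drop]

lemma le_of_isMatch {j' : Fin k} (h : IsMatch f i j) (h' : IsMatch f i j') : j ≤ j' :=
  not_lt.1 fun hlt => (h'.drop.trans_le (h.le_height (j' + 1) (Nat.lt_succ_of_lt h'.lt) hlt)).false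

lemma unique_right {j' : Fin k} (h : IsMatch f i j) (h' : IsMatch f i j') : j = j' :=
  le_antisymm (h.le_of_isMatch h') (h'.le_of_isMatch h)

lemma not_lt_left {i' : Fin k} (h : IsMatch f i j) (h' : IsMatch f i' j) : ¬ i < i' := by
  intro hii'
  have h1 := h.le_height i' hii' h'.lt.le
  have h2 := h'.le_height j h'.lt le_rfl
  have h3 := height_succ f i'
  have h4 := height_succ f j
  rw [h'.up, step_true] at h3
  rw [h.down, step_false] at h4
  linarith [h.drop]

lemma unique_left {i' : Fin k} (h : IsMatch f i j) (h' : IsMatch f i' j) : i = i' :=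
  le_antisymm (not_lt.1 (h'.not_lt_left h)) (not_lt.1 (h.not_lt_left h'))

lemma not_crossing {a b c d : Fin k} (hac : IsMatch f a c) (hbd : IsMatch f b d) (hab : a < b)
    (hbc : b < c) : ¬ c < d := by
  intro hcd
  have h1 := hac.le_height b hab hbc.le
  have h2 := hbd.le_height (c + 1) (by omega) (by omega)
  have h3 := height_succ f b
  rw [hbd.up, step_true] at h3
  linarith [hac.drop]

end IsMatch

lemma exists_isMatch (hf : f ∈ dyckPaths k 0) {i : Fin k} (hi : f i = true) :
    ∃ j, IsMatch f i j := by
  obtain ⟨hnonneg, hend⟩ := mem_dyckPaths.1 hf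
  have hup : height f (i + 1) = height f i + 1 := by rw [height_succ, hi, step_true]
  have hik : i.val < k - 1 := by
    by_contra hik
    rw [show i.val + 1 = k by omega, hend] at hup
    linarith [hnonneg i]
  let C : Finset (Fin k) := {j | i < j ∧ height f (j + 1) < height f (i + 1)}
  have hC : C.Nonempty := ⟨⟨k - 1, by omega⟩, by
    simp only [C, mem_filter, mem_univ, true_and, Fin.lt_def, show k - 1 + 1 = k by omega, hend]
    exact ⟨hik, by linarith [hnonneg i]⟩⟩
  obtain ⟨j, hjC, hjmin⟩ := C.exists_min_image id hC
  simp only [C, mem_filter, mem_univ, true_and, id] at hjC hjmin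
  refine ⟨j, ⟨hi, hjC.1, hjC.2, fun t hit htj => ?_⟩⟩
  rcases (show (i : ℕ) + 1 ≤ t by omega).eq_or_lt with rfl | hlt
  · rfl
  · by_contra hlow
    have : (j : ℕ) ≤ t - 1 := hjmin ⟨t - 1, by omega⟩ ⟨Fin.lt_def.2 (by simp only; omega), by
      simp only [show t - 1 + 1 = t by omega]; linarith⟩
    omega

lemma exists_isMatch_of_eq_false (hf : f ∈ dyckPaths k 0) {c : Fin k} (hc : f c = false) :
    ∃ i, IsMatch f i c := by
  -- matching is injective on up-steps, and a Dyck path has as many up-steps as down-steps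
  have hcard : #{i | f i = false} ≤ #{i | f i} := by
    have := height_eq_card_sub_card f
    rw [(mem_dyckPaths.1 hf).2] at this
    omega
  choose m hm using fun i => (em (f i = true)).elim (fun hi => (exists_isMatch hf hi).imp
    fun _ h _ => h) fun hi => ⟨i, fun h => absurd h hi⟩
  obtain ⟨i, hi, rfl⟩ := surjOn_of_injOn_of_card_le m
    (fun i hi => by simpa using (hm i (mem_filter.1 hi).2).down)
    (fun i hi i' hi' h => (hm i (mem_filter.1 hi).2).unique_left
      (h ▸ hm i' (mem_filter.1 hi').2)) hcard (by simpa using hc)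
  exact ⟨i, hm i (mem_filter.1 hi).2⟩

end Matching

section Pairings

variable {k : ℕ} {P : Finset (Finset (Fin k))}

open scoped Classical in
noncomputable def partner (P : Finset (Finset (Fin k))) (x : Fin k) : Fin k :=
  if h : ∃ y, y ≠ x ∧ {x, y} ∈ P then h.choose else x

namespace IsPairing

variable (hP : IsPairing P)
include hP

lemma exists_pair_mem (x : Fin k) : ∃ y, y ≠ x ∧ {x, y} ∈ P := by
  obtain ⟨B, ⟨hBP, hxB⟩, -⟩ := hP.2 x
  obtain ⟨a, b, hab, rfl⟩ := card_eq_two.1 (hP.1 B hBP)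
  rcases mem_insert.1 hxB with rfl | hxb
  · exact ⟨b, hab.symm, hBP⟩
  · obtain rfl := mem_singleton.1 hxb
    exact ⟨a, hab, pair_comm a x ▸ hBP⟩

lemma partner_spec (x : Fin k) : partner P x ≠ x ∧ {x, partner P x} ∈ P := by
  rw [partner, dif_pos (hP.exists_pair_mem x)]
  exact (hP.exists_pair_mem x).choose_spec

lemma eq_partner {x y : Fin k} (hyx : y ≠ x) (h : {x, y} ∈ P) : y = partner P x := by
  have hblock : ({x, y} : Finset (Fin k)) = {x, partner P x} :=
    (hP.2 x).unique ⟨h, mem_insert_self _ _⟩ ⟨(hP.partner_spec x).2, mem_insert_self _ _⟩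
  have hy : y ∈ ({x, partner P x} : Finset (Fin k)) := hblock ▸ by simp
  simpa [hyx] using hy

lemma partner_partner (x : Fin k) : partner P (partner P x) = x :=
  (hP.eq_partner (hP.partner_spec x).1.symm (pair_comm x _ ▸ (hP.partner_spec x).2)).symm

lemma partner_injective : Function.Injective (partner P) :=
  Function.LeftInverse.injective hP.partner_partner

lemma exists_lt_partner_of_mem {B : Finset (Fin k)} (hB : B ∈ P) :
    ∃ x, x < partner P x ∧ B = {x, partner P x} := by
  obtain ⟨a, b, hab, rfl⟩ := card_eq_two.1 (hP.1 B hB)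
  have hb := hP.eq_partner hab.symm hB
  rcases hab.lt_or_gt with h | h
  · exact ⟨a, hb ▸ h, hb ▸ rfl⟩
  · refine ⟨b, ?_, ?_⟩ <;> rw [hb, hP.partner_partner] <;> simp [← hb, h, pair_comm]

end IsPairing

lemma IsNonCrossingPairing.partner_mem_Ioo (hP : IsNonCrossingPairing P) {i x : Fin k}
    (hix : i < x) (hxi : x < partner P i) : i < partner P x ∧ partner P x < partner P i := by
  have hpair := hP.1
  have hxi' : partner P x ≠ i := fun h => hxi.ne (by rw [← h, hpair.partner_partner])
  have hpx : partner P x ≠ partner P i := fun h => hix.ne' (hpair.partner_injective h)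
  refine ⟨(lt_or_gt_of_ne hxi').resolve_left fun h => hP.2 ?_,
    (lt_or_gt_of_ne hpx).resolve_right fun h => hP.2 ?_⟩
  · exact ⟨partner P x, i, x, partner P i, h, hix, hxi,
      pair_comm x _ ▸ (hpair.partner_spec x).2, (hpair.partner_spec i).2⟩
  · exact ⟨i, x, partner P i, partner P x, hix, hxi, h, (hpair.partner_spec i).2,
      (hpair.partner_spec x).2⟩

noncomputable def openerPath (P : Finset (Finset (Fin k))) (i : Fin k) : Bool :=
  decide (i < partner P i)

lemma IsPairing.openerPath_partner (hP : IsPairing P) (i : Fin k) :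
    openerPath P (partner P i) = !openerPath P i := by
  have hne := (hP.partner_spec i).1
  rcases lt_or_gt_of_ne hne with h | h <;>
    simp [openerPath, hP.partner_partner, h, h.not_gt]

lemma IsPairing.openerPath_eq_false_iff (hP : IsPairing P) {i : Fin k} :
    openerPath P i = false ↔ partner P i < i := by
  simpa [openerPath] using ⟨fun h => lt_of_le_of_ne h (hP.partner_spec i).1, le_of_lt⟩

lemma IsPairing.openerPath_mem_dyckPaths (hP : IsPairing P) : openerPath P ∈ dyckPaths k 0 := by
  refine mem_dyckPaths.2 ⟨fun t => ?_, ?_⟩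
  · refine sum_step_nonneg_of_injOn _ hP.partner_injective.injOn fun i hi hopen => ?_
    have hlt := hP.openerPath_eq_false_iff.1 hopen
    simp only [mem_filter, mem_univ, true_and] at hi ⊢
    exact ⟨by omega, by rw [hP.openerPath_partner, hopen]; rfl⟩
  · exact sum_step_eq_zero_of_injOn _ hP.partner_injective.injOn fun i _ =>
      ⟨by simp, hP.openerPath_partner i⟩

lemma IsNonCrossingPairing.isMatch_partner (hP : IsNonCrossingPairing P) {i : Fin k}
    (hi : i < partner P i) : IsMatch (openerPath P) i (partner P i) := by
  have hinside {t : ℕ} {x : Fin k}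
      (hx : x ∈ ({x | (i : ℕ) + 1 ≤ x.val ∧ x.val < t} : Finset (Fin k))) (ht : t ≤ partner P i) : i < partner P x ∧ partner P x < partner P i := by
    simp only [mem_filter, mem_univ, true_and] at hx
    exact hP.partner_mem_Ioo (by omega) (by omega)
  have hrise (t : ℕ) (hit : i < t) (htp : t ≤ partner P i) :
      height (openerPath P) (i + 1) ≤ height (openerPath P) t := by
    have hsum := height_sub_height (openerPath P) (show (i : ℕ) + 1 ≤ t by omega)
    have : 0 ≤ ∑ x : Fin k with (i : ℕ) + 1 ≤ x.val ∧ x.val < t, step (openerPath P x) := by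
      refine sum_step_nonneg_of_injOn _ hP.1.partner_injective.injOn fun x hx hclose => ?_
      have hlt := hP.1.openerPath_eq_false_iff.1 hclose
      have := (hinside hx htp).1
      simp only [mem_filter, mem_univ, true_and] at hx ⊢
      exact ⟨⟨by omega, by omega⟩, by rw [hP.1.openerPath_partner, hclose]; rfl⟩
    linarith
  have hflat : height (openerPath P) (partner P i) = height (openerPath P) (i + 1) := by
    have hsum := height_sub_height (openerPath P) (show (i : ℕ) + 1 ≤ partner P i by omega)
    have : ∑ x : Fin k with (i : ℕ) + 1 ≤ x.val ∧ x.val < (partner P i).val,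
        step (openerPath P x) = 0 := by
      refine sum_step_eq_zero_of_injOn _ hP.1.partner_injective.injOn fun x hx => ?_
      have := hinside hx le_rfl
      simp only [mem_filter, mem_univ, true_and] at hx ⊢
      exact ⟨⟨by omega, by omega⟩, hP.1.openerPath_partner x⟩
    linarith
  have hdown : openerPath P (partner P i) = false := by
    rw [hP.1.openerPath_partner]; simp [openerPath, hi]
  refine ⟨by simpa [openerPath], hi, ?_, hrise⟩
  rw [height_succ, hflat, hdown, step_false]
  omega

end Pairings

section PairsOf

variable {k : ℕ} {R : Fin k → Fin k → Prop}

open scoped Classical in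
noncomputable def pairsOf (R : Fin k → Fin k → Prop) : Finset (Finset (Fin k)) :=
  {B | ∃ i j, R i j ∧ B = {i, j}}

lemma mem_pairsOf {B : Finset (Fin k)} : B ∈ pairsOf R ↔ ∃ i j, R i j ∧ B = {i, j} := by
  simp [pairsOf]

lemma isPairing_pairsOf (hne : ∀ i j, R i j → i ≠ j) (hR : ∀ x, ∃! y, R x y ∨ R y x) :
    IsPairing (pairsOf R) := by
  refine ⟨fun B hB => ?_, fun x => ?_⟩
  · obtain ⟨i, j, hij, rfl⟩ := mem_pairsOf.1 hB
    exact card_pair (hne i j hij)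
  obtain ⟨y, hy, huniq⟩ := hR x
  refine ⟨{x, y}, ⟨mem_pairsOf.2 ?_, mem_insert_self x _⟩, ?_⟩
  · exact hy.elim (fun h => ⟨x, y, h, rfl⟩) fun h => ⟨y, x, h, pair_comm x y⟩
  rintro B ⟨hB, hxB⟩
  obtain ⟨i, j, hij, rfl⟩ := mem_pairsOf.1 hB
  rcases mem_insert.1 hxB with rfl | hxj
  · rw [huniq j (Or.inl hij)]
  · obtain rfl := mem_singleton.1 hxj
    rw [huniq i (Or.inr hij), pair_comm]

lemma rel_of_pair_mem_pairsOf (hlt : ∀ i j, R i j → i < j) {a c : Fin k} (hac : a < c)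
    (h : {a, c} ∈ pairsOf R) : R a c := by
  obtain ⟨i, j, hij, heq⟩ := mem_pairsOf.1 h
  have := congrArg ((↑) : Finset (Fin k) → Set (Fin k)) heq
  simp only [coe_pair, Set.pair_eq_pair_iff] at this
  rcases this with ⟨rfl, rfl⟩ | ⟨rfl, rfl⟩
  · exact hij
  · exact absurd (hlt _ _ hij) hac.not_gt

end PairsOf

section Bijection

variable {k : ℕ} {f : Fin k → Bool}

lemma isNonCrossingPairing_pairsOf_isMatch (hf : f ∈ dyckPaths k 0) :
    IsNonCrossingPairing (pairsOf (IsMatch f)) := by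
  refine ⟨isPairing_pairsOf (fun _ _ h => h.lt.ne) fun x => ?_, ?_⟩
  · cases hx : f x
    · obtain ⟨i, hi⟩ := exists_isMatch_of_eq_false hf hx
      exact ⟨i, Or.inr hi, fun y hy => hy.elim (fun h => absurd h.up (by simp [hx]))
        fun h => h.unique_left hi⟩
    · obtain ⟨j, hj⟩ := exists_isMatch hf hx
      exact ⟨j, Or.inl hj, fun y hy => hy.elim (fun h => (hj.unique_right h).symm)
        fun h => absurd h.down (by simp [hx])⟩
  · rintro ⟨a, b, c, d, hab, hbc, hcd, hac, hbd⟩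
    have hlt : ∀ i j, IsMatch f i j → i < j := fun _ _ h => h.lt
    exact (rel_of_pair_mem_pairsOf hlt (hab.trans hbc) hac).not_crossing
      (rel_of_pair_mem_pairsOf hlt (hbc.trans hcd) hbd) hab hbc hcd

lemma openerPath_pairsOf_isMatch (hf : f ∈ dyckPaths k 0) :
    openerPath (pairsOf (IsMatch f)) = f := by
  have hP := (isNonCrossingPairing_pairsOf_isMatch hf).1
  funext x
  cases hx : f x
  · obtain ⟨i, hi⟩ := exists_isMatch_of_eq_false hf hx
    rw [hP.openerPath_eq_false_iff,
      ← hP.eq_partner hi.lt.ne (mem_pairsOf.2 ⟨i, x, hi, pair_comm x i⟩)]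
    exact hi.lt
  · obtain ⟨j, hj⟩ := exists_isMatch hf hx
    simp [openerPath, ← hP.eq_partner hj.lt.ne' (mem_pairsOf.2 ⟨x, j, hj, rfl⟩), hj.lt]

lemma IsNonCrossingPairing.pairsOf_isMatch_openerPath {P : Finset (Finset (Fin k))}
    (hP : IsNonCrossingPairing P) : pairsOf (IsMatch (openerPath P)) = P := by
  ext B
  rw [mem_pairsOf]
  constructor
  · rintro ⟨i, j, hij, rfl⟩
    have hi : i < partner P i := by simpa [openerPath] using hij.up
    rw [hij.unique_right (hP.isMatch_partner hi)]
    exact (hP.1.partner_spec i).2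
  · intro hB
    obtain ⟨x, hx, rfl⟩ := hP.1.exists_lt_partner_of_mem hB
    exact ⟨x, _, hP.isMatch_partner hx, rfl⟩

theorem ncard_nonCrossingPairings (k : ℕ) :
    {P : Finset (Finset (Fin k)) | IsNonCrossingPairing P}.ncard = #(dyckPaths k 0) := by
  classical
  rw [Set.ncard_eq_toFinset_card', Set.toFinset_ofPred]
  refine card_nbij' openerPath (fun f => pairsOf (IsMatch f)) (fun P hP => ?_) (fun f hf => ?_)
    (fun P hP => ?_) fun f hf => ?_
  · exact (mem_filter.1 hP).2.1.openerPath_mem_dyckPaths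
  · exact mem_filter.2 ⟨mem_univ _, isNonCrossingPairing_pairsOf_isMatch hf⟩
  · exact (mem_filter.1 hP).2.pairsOf_isMatch_openerPath
  · exact openerPath_pairsOf_isMatch hf

end Bijection

section Shift

variable {𝕜 : Type*} [RCLike 𝕜] (S : lp (fun _ : ℕ => 𝕜) 2 →L[𝕜] lp (fun _ : ℕ => 𝕜) 2)

lemma inner_single_one_left (n : ℕ) (ξ : lp (fun _ : ℕ => 𝕜) 2) :
    inner 𝕜 (lp.single 2 n (1 : 𝕜)) ξ = ξ n := by
  simp [lp.inner_single_left]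

lemma inner_vacuum_left {Ω : lp (fun _ : ℕ => 𝕜) 2} (hΩ : ∀ n, Ω n = if n = 0 then 1 else 0)
    (ξ : lp (fun _ : ℕ => 𝕜) 2) : inner 𝕜 Ω ξ = ξ 0 := by
  obtain rfl : Ω = lp.single 2 0 1 := by ext n; simp [hΩ, Pi.single_apply]
  exact inner_single_one_left 0 ξ

lemma adjoint_apply_of_shift (hS : ∀ ξ n, S ξ (n + 1) = ξ n) (hS0 : ∀ ξ, S ξ 0 = 0)
    (ξ : lp (fun _ : ℕ => 𝕜) 2) (n : ℕ) : S.adjoint ξ n = ξ (n + 1) := by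
  have hsingle : S (lp.single 2 n 1) = lp.single 2 (n + 1) 1 := by
    ext (_ | m)
    · simp [hS0]
    · simp [hS, Pi.single_apply]
  rw [← inner_single_one_left, ContinuousLinearMap.adjoint_inner_right, hsingle,
    inner_single_one_left]

lemma shift_add_adjoint_pow_apply (hS : ∀ ξ n, S ξ (n + 1) = ξ n) (hS0 : ∀ ξ, S ξ 0 = 0)
    {Ω : lp (fun _ : ℕ => 𝕜) 2} (hΩ : ∀ n, Ω n = if n = 0 then 1 else 0) (k n : ℕ) :
    ((S + S.adjoint) ^ k) Ω n = #(dyckPaths k n) := by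
  induction k generalizing n with
  | zero => simp [hΩ, card_dyckPaths_zero]
  | succ k ih =>
    set v := ((S + S.adjoint) ^ k) Ω
    have hv : ((S + S.adjoint) ^ (k + 1)) Ω = S v + S.adjoint v := by rw [pow_succ']; rfl
    rw [hv, lp.coeFn_add, Pi.add_apply, adjoint_apply_of_shift S hS hS0,
      card_dyckPaths_succ (by positivity)]
    rcases n with _ | n
    · simp [hS0, ih, dyckPaths_eq_empty]
    · simp only [hS, ih, Nat.cast_add, Nat.cast_one, add_sub_cancel_right, add_assoc]

end Shift

/-- Let `ℓ` be the creation operator on `F(ℂ)` (the shift `e^{⊗n} ↦ e^{⊗(n+1)}`),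
`Ω` the vacuum, and `φ(a) = ⟨Ω, aΩ⟩`. Then `φ((ℓ + ℓ*)^k)` equals the number of
non-crossing pairings of `{1, …, k}`; in particular it vanishes for odd `k` and
equals the Catalan number `C_{k/2} = (1/(k/2+1))·binomial(k, k/2)` for even `k`. -/
theorem vacuum_moments_creation_plus_annihilation
    (S : FockC →L[ℂ] FockC)
    (hS : ∀ (ξ : FockC) (n : ℕ), (S ξ) (n + 1) = ξ n)
    (hS0 : ∀ ξ : FockC, (S ξ) 0 = 0)
    (Ω : FockC) (hΩ : ∀ n, Ω n = if n = 0 then 1 else 0) (k : ℕ) :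
    (inner ℂ Ω (((S + ContinuousLinearMap.adjoint S) ^ k) Ω) : ℂ)
        = (Set.ncard {P : Finset (Finset (Fin k)) | IsNonCrossingPairing P} : ℂ) ∧
    (Odd k → (inner ℂ Ω (((S + ContinuousLinearMap.adjoint S) ^ k) Ω) : ℂ) = 0) ∧
    (∀ m : ℕ, k = 2 * m →
      (inner ℂ Ω (((S + ContinuousLinearMap.adjoint S) ^ k) Ω) : ℂ)
        = (Nat.choose (2 * m) m : ℂ) / (m + 1)) := by
  have hmoment : inner ℂ Ω (((S + S.adjoint) ^ k) Ω) = (#(dyckPaths k 0) : ℂ) := by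
    rw [inner_vacuum_left hΩ, shift_add_adjoint_pow_apply S hS hS0 hΩ k 0, Nat.cast_zero]
  refine ⟨?_, fun hodd => ?_, fun m hm => ?_⟩
  · rw [hmoment, ncard_nonCrossingPairings]
  · rw [hmoment, dyckPaths_zero_eq_empty_of_odd hodd, card_empty, Nat.cast_zero]
  · subst hm
    have hballot := card_dyckPaths_eq_choose_sub_choose (2 * m) (n := 0) (u := m) (by norm_num)
      (by push_cast; ring)
    rw [hmoment, ← choose_sub_choose_succ_eq_div]
    exact_mod_cast hballot
end

section
/- Let ℓ be the creation operator on F(ℂ), f a polynomial with real coefficients, x = ℓ* + f(ℓ), and φ(a) = ⟨Ω, aΩ⟩. Then for all sufficiently small z ≠ 0 (so that (1/z + f(z))·1 − x* is invertible), φ(((1/z + f(z))·1 − x*)^{−1}) = z. Consequently the Cauchy transform G of the law of x satisfies G(1/z + f(z)) = z, i.e., K(z) = 1/z + f(z) is the compositional inverse of G. -/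
/-! The geometric vector `ξ_z = (1, z, z², …)` is an eigenvector of the annihilation operator
`ℓ*` with eigenvalue `z`, and `z ℓ ξ_z = ξ_z - Ω`. Since `f` is real, `x* = ℓ + f(ℓ*)`, so
`(1/z + f(z) - x*)(z ξ_z) = Ω`. For small `z` the scalar `1/z + f(z)` exceeds `‖x*‖` in modulus,
so `1/z + f(z) - x*` is invertible and `φ((1/z + f(z) - x*)⁻¹) = ⟨Ω, z ξ_z⟩ = z`. The claim for
`x` follows by taking adjoints at `z̄`, because `1/z̄ + f(z̄)` is the conjugate of `1/z + f(z)`. -/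

open ContinuousLinearMap Polynomial Filter Topology ComplexConjugate

theorem Polynomial.star_aeval {R A : Type*} [CommSemiring R] [StarRing R] [TrivialStar R]
    [Semiring A] [StarRing A] [Algebra R A] [StarModule R A] (p : R[X]) (a : A) :
    star (aeval a p) = aeval (star a) p := by
  induction p using Polynomial.induction_on' with
  | add p q hp hq => simp only [map_add, star_add, hp, hq]
  | monomial n c =>
    rw [aeval_monomial, aeval_monomial, star_mul, star_pow, ← algebraMap_star_comm,
      star_trivial c]
    exact (Algebra.commutes c _).symm

theorem Polynomial.eval_map_ofReal_conj (f : ℝ[X]) (z : ℂ) :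
    (f.map (algebraMap ℝ ℂ)).eval (conj z) = conj ((f.map (algebraMap ℝ ℂ)).eval z) := by
  simp only [eval_map_algebraMap, aeval_conj]

theorem ContinuousLinearMap.adjoint_aeval_map_algebraMap {E : Type*}
    [NormedAddCommGroup E] [InnerProductSpace ℂ E] [CompleteSpace E] (A : E →L[ℂ] E)
    (f : ℝ[X]) :
    adjoint (aeval A (f.map (algebraMap ℝ ℂ))) = aeval (adjoint A) (f.map (algebraMap ℝ ℂ)) := by
  rw [← star_eq_adjoint, ← star_eq_adjoint, aeval_map_algebraMap, aeval_map_algebraMap,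
    star_aeval]

theorem ContinuousLinearMap.aeval_apply_of_apply_eq_smul {𝕜 E : Type*} [NormedField 𝕜]
    [NormedAddCommGroup E] [NormedSpace 𝕜 E] {A : E →L[𝕜] E} {c : 𝕜} {v : E}
    (h : A v = c • v) (p : 𝕜[X]) : aeval A p v = p.eval c • v := by
  induction p using Polynomial.induction_on' with
  | add p q hp hq => simp only [map_add, add_apply, hp, hq, eval_add, add_smul]
  | monomial n a =>
    have hpow (m : ℕ) : (A ^ m) v = c ^ m • v := by
      induction m with
      | zero => simp
      | succ m ih => rw [pow_succ, mul_apply_eq_comp, h, map_smul, ih, smul_smul, pow_succ']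
    simp [aeval_monomial, Algebra.algebraMap_eq_smul_one, hpow, smul_smul]

theorem ContinuousLinearMap.isUnit_smul_one_sub_of_norm_lt {𝕜 E : Type*}
    [NontriviallyNormedField 𝕜] [NormedAddCommGroup E] [NormedSpace 𝕜 E] [CompleteSpace E]
    {B : E →L[𝕜] E} {c : 𝕜} (h : ‖B‖ < ‖c‖) : IsUnit (c • 1 - B) := by
  have hc : c ∈ resolventSet 𝕜 B := spectrum.mem_resolventSet_of_norm_lt_mul <|
    (mul_le_of_le_one_right (norm_nonneg B) norm_id_le).trans_lt h
  simpa [spectrum.mem_resolventSet_iff, Algebra.algebraMap_eq_smul_one] using hc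

theorem ContinuousLinearMap.inner_ring_inverse_adjoint_apply {𝕜 E : Type*} [RCLike 𝕜]
    [NormedAddCommGroup E] [InnerProductSpace 𝕜 E] [CompleteSpace E] (T : E →L[𝕜] E) (u : E) :
    inner 𝕜 u (Ring.inverse (adjoint T) u) = conj (inner 𝕜 u (Ring.inverse T u)) := by
  rw [← star_eq_adjoint, Ring.inverse_star, star_eq_adjoint, adjoint_inner_right,
    inner_conj_symm]

theorem tendsto_norm_inv_add_eval_nhdsNE_zero (p : ℂ[X]) :
    Tendsto (fun z : ℂ => ‖1 / z + p.eval z‖) (𝓝[≠] 0) atTop := by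
  have hp : Tendsto (fun z : ℂ => -‖p.eval z‖) (𝓝[≠] 0) (𝓝 (-‖p.eval 0‖)) :=
    ((p.continuous.tendsto 0).norm.neg).mono_left nhdsWithin_le_nhds
  refine tendsto_atTop_mono (fun z => ?_) (tendsto_norm_inv_nhdsNE_zero_atTop.atTop_add hp)
  simpa [one_div, sub_eq_add_neg] using norm_sub_norm_le (1 / z) (-p.eval z)

theorem memℓp_two_geometric {z : ℂ} (hz : ‖z‖ < 1) : Memℓp (fun n : ℕ => z ^ n) 2 := by
  refine memℓp_gen ((summable_geometric_of_lt_one (by positivity)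
    (pow_lt_one₀ (norm_nonneg z) hz two_ne_zero)).congr fun n => ?_)
  simp [← pow_mul, mul_comm]

namespace FockC

noncomputable def geometricVector {z : ℂ} (hz : ‖z‖ < 1) : FockC :=
  ⟨fun n => z ^ n, memℓp_two_geometric hz⟩

@[simp]
theorem geometricVector_apply {z : ℂ} (hz : ‖z‖ < 1) (n : ℕ) : geometricVector hz n = z ^ n :=
  rfl

theorem smul_shift_geometricVector {S : FockC →L[ℂ] FockC}
    (hS : ∀ (ξ : FockC) (n : ℕ), (S ξ) (n + 1) = ξ n) (hS0 : ∀ ξ : FockC, (S ξ) 0 = 0)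
    {z : ℂ} (hz : ‖z‖ < 1) :
    z • S (geometricVector hz) = geometricVector hz - lp.single 2 0 1 := by
  ext (_ | n)
  · simp [hS0, lp.single_apply]
  · simp [hS, lp.single_apply, pow_succ']

theorem adjoint_shift_geometricVector {S : FockC →L[ℂ] FockC}
    (hS : ∀ (ξ : FockC) (n : ℕ), (S ξ) (n + 1) = ξ n) (hS0 : ∀ ξ : FockC, (S ξ) 0 = 0)
    {z : ℂ} (hz : ‖z‖ < 1) :
    adjoint S (geometricVector hz) = z • geometricVector hz := by
  refine ext_inner_right ℂ fun v => ?_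
  rw [adjoint_inner_left, inner_smul_left]
  refine (lp.hasSum_inner _ _).unique ?_
  have hshift := ((lp.hasSum_inner (geometricVector hz) v).mul_left (conj z))
  have hhead : ∑ i ∈ Finset.range 1, inner ℂ (geometricVector hz i) (S v i) = 0 := by
    simp [hS0]
  have hterm (n : ℕ) : inner ℂ (geometricVector hz (n + 1)) (S v (n + 1))
      = conj z * inner ℂ (geometricVector hz n) (v n) := by
    simp only [geometricVector_apply, pow_succ', hS, RCLike.inner_apply, map_mul, map_pow]
    ring
  rw [← hasSum_nat_add_iff' 1, hhead, sub_zero]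
  simpa only [hterm] using hshift

theorem smul_one_sub_apply_smul_geometricVector {S : FockC →L[ℂ] FockC}
    (hS : ∀ (ξ : FockC) (n : ℕ), (S ξ) (n + 1) = ξ n) (hS0 : ∀ ξ : FockC, (S ξ) 0 = 0)
    (p : ℂ[X]) {w : ℂ} (hw0 : w ≠ 0) (hw : ‖w‖ < 1) :
    ((1 / w + p.eval w) • (1 : FockC →L[ℂ] FockC) - (S + aeval (adjoint S) p))
      (w • geometricVector hw) = lp.single 2 0 1 := by
  have hp := aeval_apply_of_apply_eq_smul (adjoint_shift_geometricVector hS hS0 hw) p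
  have hSξ := smul_shift_geometricVector hS hS0 hw
  rw [sub_apply, add_apply, smul_apply, one_apply_eq_self, map_smul, map_smul, hp, hSξ,
    smul_smul, add_mul, one_div, inv_mul_cancel₀ hw0]
  module

theorem isUnit_and_inner_vacuum_inverse_eq {S : FockC →L[ℂ] FockC}
    (hS : ∀ (ξ : FockC) (n : ℕ), (S ξ) (n + 1) = ξ n) (hS0 : ∀ ξ : FockC, (S ξ) 0 = 0)
    (p : ℂ[X]) {w : ℂ} (hw0 : w ≠ 0) (hw : ‖w‖ < 1)
    (hnorm : ‖S + aeval (adjoint S) p‖ < ‖1 / w + p.eval w‖) :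
    IsUnit ((1 / w + p.eval w) • 1 - (S + aeval (adjoint S) p)) ∧
      inner ℂ (lp.single 2 0 1 : FockC)
        (Ring.inverse ((1 / w + p.eval w) • 1 - (S + aeval (adjoint S) p)) (lp.single 2 0 1))
        = w := by
  set T := (1 / w + p.eval w) • (1 : FockC →L[ℂ] FockC) - (S + aeval (adjoint S) p)
  have hT : IsUnit T := isUnit_smul_one_sub_of_norm_lt hnorm
  have hinv : Ring.inverse T (lp.single 2 0 1) = w • geometricVector hw := by
    rw [← smul_one_sub_apply_smul_geometricVector hS hS0 p hw0 hw, ← mul_apply_eq_comp,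
      Ring.inverse_mul_cancel T hT, one_apply_eq_self]
  refine ⟨hT, ?_⟩
  simp [hinv, lp.inner_single_left]

end FockC

/-- Haagerup's computation: let `ℓ` be the creation operator on `F(ℂ)`, `f` a real
polynomial, `x = ℓ* + f(ℓ)`, and `φ(a) = ⟨Ω, aΩ⟩` the vacuum state. Then for all
sufficiently small `z ≠ 0` the operators `(1/z + f(z))·1 − x*` and `(1/z + f(z))·1 − x`
are invertible, `φ(((1/z + f(z))·1 − x*)⁻¹) = z`, and consequently the Cauchy transform
`G(λ) = φ((λ·1 − x)⁻¹)` of the law of `x` satisfies `G(1/z + f(z)) = z`. -/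
theorem haagerup_R_transform_inverse
    (S : FockC →L[ℂ] FockC)
    (hS : ∀ (ξ : FockC) (n : ℕ), (S ξ) (n + 1) = ξ n)
    (hS0 : ∀ ξ : FockC, (S ξ) 0 = 0)
    (Ω : FockC) (hΩ : ∀ n, Ω n = if n = 0 then 1 else 0)
    (f : Polynomial ℝ) :
    ∃ δ > (0 : ℝ), ∀ z : ℂ, z ≠ 0 → ‖z‖ < δ →
      (letI fC : Polynomial ℂ := f.map (algebraMap ℝ ℂ)
       letI x : FockC →L[ℂ] FockC := ContinuousLinearMap.adjoint S + Polynomial.aeval S fC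
       letI T : FockC →L[ℂ] FockC :=
         (1 / z + fC.eval z) • (1 : FockC →L[ℂ] FockC) - ContinuousLinearMap.adjoint x
       letI T' : FockC →L[ℂ] FockC :=
         (1 / z + fC.eval z) • (1 : FockC →L[ℂ] FockC) - x
       (IsUnit T ∧ (inner ℂ Ω ((Ring.inverse T) Ω) : ℂ) = z) ∧
       (IsUnit T' ∧ (inner ℂ Ω ((Ring.inverse T') Ω) : ℂ) = z)) := by
  obtain rfl : Ω = lp.single 2 0 1 := by ext n; simp [hΩ, lp.single_apply, Pi.single_apply]
  set fC := f.map (algebraMap ℝ ℂ)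
  set x := adjoint S + aeval S fC
  have hx : adjoint x = S + aeval (adjoint S) fC := by
    rw [map_add, adjoint_adjoint, adjoint_aeval_map_algebraMap]
  have hconj (z : ℂ) : 1 / conj z + fC.eval (conj z) = conj (1 / z + fC.eval z) := by
    rw [eval_map_ofReal_conj, map_add, map_div₀, map_one]
  have hsmall : ∀ᶠ z in 𝓝[≠] (0 : ℂ), ‖z‖ < 1 ∧ ‖adjoint x‖ < ‖1 / z + fC.eval z‖ :=
    (((continuous_norm.tendsto' 0 0 norm_zero).eventually_lt_const one_pos).filter_mono
      nhdsWithin_le_nhds).and ((tendsto_norm_inv_add_eval_nhdsNE_zero fC).eventually_gt_atTop _)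
  obtain ⟨δ, hδ, hδsmall⟩ := Metric.eventually_nhds_iff.1 (eventually_nhdsWithin_iff.1 hsmall)
  refine ⟨δ, hδ, fun z hz0 hzδ => ?_⟩
  obtain ⟨hz1, hzx⟩ := hδsmall (by rwa [dist_zero_right]) hz0
  rw [hx] at hzx
  have hadj : (1 / z + fC.eval z) • 1 - x
      = adjoint ((1 / conj z + fC.eval (conj z)) • 1 - adjoint x) := by
    rw [← star_eq_adjoint, star_sub, star_smul, star_one, star_eq_adjoint, adjoint_adjoint,
      hconj, Complex.star_def, Complex.conj_conj]
  obtain ⟨hT', hφ'⟩ := FockC.isUnit_and_inner_vacuum_inverse_eq hS hS0 fC (w := conj z)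
    (by simpa) (by simpa) (by rwa [hconj, Complex.norm_conj])
  refine ⟨hx ▸ FockC.isUnit_and_inner_vacuum_inverse_eq hS hS0 fC hz0 hz1 hzx, ?_, ?_⟩
  · rw [hadj, hx]
    exact hT'.star
  · rw [hadj, inner_ring_inverse_adjoint_apply, hx, hφ', Complex.conj_conj]
end
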